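/- Let 𝓡 be the subring of ℤ[v^{±1}, z^{±1}] generated by v, v⁻¹, z and (v⁻¹ − v)z⁻¹, and let P(v,z) = (3 − 5v⁻² + 4v⁻⁴ − v⁻⁶) + (4 − 10v⁻² + 5v⁻⁴)z² + (1 − 6v⁻² + v⁻⁴)z⁴ − v⁻²z⁶ ∈ 𝓡. Then for every prime r ≥ 7, the element P(v,z) − P(v⁻¹,−z) does not lie in the ideal of 𝓡 generated by r and z^r. -/

import Mathlib

/-!
Write `w = v⁻¹ - v`. The coefficient of `z⁻ᵏ` of every element of `𝓡` is divisible by `wᵏ`: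
this holds for the generators and is preserved by sums and products. Comparing coefficients of
`z⁰`, a decomposition `P(v,z) - P(v⁻¹,-z) = r a + zʳ b` therefore puts `c₀(v) - c₀(v⁻¹)` in the
ideal `(r, wʳ)` of `ℤ[v^{±1}]`, where `c₀` is the `z⁰`-coefficient of `P`. Clearing powers of `v`
and reducing mod `r`, `(v - 1)ʳ` would divide `vᵏ (c₀(v) - c₀(v⁻¹))` in `𝔽_r[v]` for some `k`.
But `v⁶ (c₀(v) - c₀(v⁻¹)) = (v - 1)⁵ S(v)` with `S(1) = 64 = 2⁶`, a unit mod `r`, so `v = 1` is a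
root of multiplicity exactly `5 < r` there.
-/

open LaurentPolynomial

/-- The Laurent polynomial ring `ℤ[v^{±1}, z^{±1}]`, with `z` the outer variable
and `v` the inner variable. -/
abbrev LL : Type := LaurentPolynomial (LaurentPolynomial ℤ)

/-- The variable `v`. -/
noncomputable def vV : LL := C (T 1)

/-- The variable `v⁻¹`. -/
noncomputable def vVinv : LL := C (T (-1))

/-- The variable `z`. -/
noncomputable def zZ : LL := T 1

/-- The variable `z⁻¹`. -/
noncomputable def zZinv : LL := T (-1)

/-- The subring `𝓡` of `ℤ[v^{±1}, z^{±1}]` generated by `v`, `v⁻¹`, `z` and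
`(v⁻¹ − v)z⁻¹`. -/
noncomputable def Rcal : Subring LL :=
  Subring.closure {vV, vVinv, zZ, (vVinv - vV) * zZinv}

/-- The skein (Homflypt) polynomial `P(v,z)` of the knot `11_{388}`:
`(3 − 5v⁻² + 4v⁻⁴ − v⁻⁶) + (4 − 10v⁻² + 5v⁻⁴)z² + (1 − 6v⁻² + v⁻⁴)z⁴ − v⁻²z⁶`. -/
noncomputable def P11388 : LL :=
  C (3 - 5 * T (-2) + 4 * T (-4) - T (-6))
    + C (4 - 10 * T (-2) + 5 * T (-4)) * T 2
    + C (1 - 6 * T (-2) + T (-4)) * T 4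
    - C (T (-2)) * T 6

/-- `P(v⁻¹, −z)`, the image of `P11388` under the ring automorphism
`v ↦ v⁻¹`, `z ↦ −z` (all powers of `z` occurring are even, so only `v`
gets inverted). -/
noncomputable def P11388' : LL :=
  C (3 - 5 * T 2 + 4 * T 4 - T 6)
    + C (4 - 10 * T 2 + 5 * T 4) * T 2
    + C (1 - 6 * T 2 + T 4) * T 4
    - C (T 2) * T 6

namespace LaurentPolynomial

section Semiring

variable {R : Type*} [Semiring R]

theorem coeff_C (a : R) (k : ℤ) : (C a).coeff k = if 0 = k then a else 0 := by
  rw [← single_eq_C, AddMonoidAlgebra.coeff_single, Finsupp.single_apply]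

theorem coeff_C_mul_T (a : R) (n k : ℤ) : (C a * T n).coeff k = if n = k then a else 0 := by
  rw [← single_eq_C_mul_T, AddMonoidAlgebra.coeff_single, Finsupp.single_apply]

theorem coeff_T_mul (n k : ℤ) (f : R[T;T⁻¹]) : (T n * f).coeff k = f.coeff (k - n) := by
  rw [T, AddMonoidAlgebra.coeff_single_mul_apply, one_mul, neg_add_eq_sub]

theorem coeff_natCast_mul (n : ℕ) (f : R[T;T⁻¹]) (k : ℤ) :
    ((n : R[T;T⁻¹]) * f).coeff k = n * f.coeff k := by
  rw [AddMonoidAlgebra.natCast_def, AddMonoidAlgebra.coeff_single_zero_mul]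

end Semiring

section CommRing

variable {R : Type*} [CommRing R]

/-- For `n ≥ 0` the exponent `(-n).toNat` is `0`: only the coefficients of negative powers of `T`
are constrained. -/
def negCoeffPowDvdSubring (w : R) : Subring R[T;T⁻¹] where
  carrier := {f | ∀ n : ℤ, w ^ (-n).toNat ∣ f.coeff n}
  zero_mem' n := by simp
  one_mem' n := by
    rcases eq_or_ne n 0 with rfl | hn
    · simp
    · rw [AddMonoidAlgebra.one_def, AddMonoidAlgebra.coeff_single, Finsupp.single_apply,
        if_neg hn.symm]
      exact dvd_zero _
  add_mem' hf hg n := by simpa using dvd_add (hf n) (hg n)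
  neg_mem' hf n := by simpa using hf n
  mul_mem' {f g} hf hg n := by
    classical
    rw [AddMonoidAlgebra.coeff_mul]
    refine Finset.dvd_sum fun i _ => Finset.dvd_sum fun j _ => ?_
    dsimp only
    split_ifs with hij
    · exact (pow_dvd_pow w (by omega)).trans <| (pow_add w _ _).symm ▸ mul_dvd_mul (hf i) (hg j)
    · exact dvd_zero _

theorem single_mem_negCoeffPowDvdSubring {w : R} {n : ℤ} {a : R} (h : w ^ (-n).toNat ∣ a) :
    .single n a ∈ negCoeffPowDvdSubring w := by
  intro m
  rw [AddMonoidAlgebra.coeff_single, Finsupp.single_apply]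
  split_ifs with hnm
  · exact hnm ▸ h
  · exact dvd_zero _

end CommRing

end LaurentPolynomial

namespace Polynomial

theorem exists_mul_X_pow_mem_of_toLaurent_mem_map {R : Type*} [CommSemiring R] {I : Ideal R[X]}
    {p : R[X]} (h : toLaurent p ∈ I.map toLaurent) : ∃ n : ℕ, p * X ^ n ∈ I := by
  obtain ⟨⟨⟨q, hq⟩, ⟨_, n, rfl⟩⟩, hpq⟩ :=
    (IsLocalization.mem_map_algebraMap_iff (.powers (X : R[X])) R[T;T⁻¹]).mp h
  refine ⟨n, ?_⟩
  rw [algebraMap_eq_toLaurent, algebraMap_eq_toLaurent, ← map_mul, toLaurent_inj] at hpq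
  exact hpq ▸ hq

theorem isRoot_of_X_sub_C_pow_succ_dvd {R : Type*} [CommRing R] {c : R} {p : R[X]} {k : ℕ}
    (h : (X - C c) ^ (k + 1) ∣ (X - C c) ^ k * p) : p.IsRoot c := by
  rwa [pow_succ, ((monic_X_sub_C c).pow k).isRegular.left.dvd_cancel_left, dvd_iff_isRoot] at h

end Polynomial

theorem Rcal_le_negCoeffPowDvdSubring : Rcal ≤ negCoeffPowDvdSubring (T (-1) - T 1) := by
  refine Subring.closure_le.mpr ?_
  rintro f (rfl | rfl | rfl | rfl)
  · rw [vV, ← single_eq_C]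
    exact single_mem_negCoeffPowDvdSubring (by simp)
  · rw [vVinv, ← single_eq_C]
    exact single_mem_negCoeffPowDvdSubring (by simp)
  · exact single_mem_negCoeffPowDvdSubring (by simp)
  · rw [vVinv, vV, zZinv, ← map_sub, ← single_eq_C_mul_T]
    exact single_mem_negCoeffPowDvdSubring (by simp)

theorem coeff_zero_P11388_sub : (P11388 - P11388').coeff 0 =
    (3 - 5 * T (-2) + 4 * T (-4) - T (-6)) - (3 - 5 * T 2 + 4 * T 4 - T 6) := by
  simp only [P11388, P11388', AddMonoidAlgebra.coeff_sub, AddMonoidAlgebra.coeff_add,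
    Finsupp.sub_apply, Finsupp.add_apply, coeff_C, coeff_C_mul_T]
  norm_num

open Polynomial

noncomputable def p11388ConstDiff : ℤ[X] :=
  X ^ 12 - 4 * X ^ 10 + 5 * X ^ 8 - 5 * X ^ 4 + 4 * X ^ 2 - 1

theorem toLaurent_p11388ConstDiff :
    toLaurent p11388ConstDiff = (P11388 - P11388').coeff 0 * T 6 := by
  simp only [coeff_zero_P11388_sub, p11388ConstDiff, map_sub, map_add, map_mul, map_one,
    map_ofNat, toLaurent_X_pow, sub_mul, add_mul, mul_assoc, ← T_add]
  norm_num
  ring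

theorem p11388ConstDiff_eq_mul : p11388ConstDiff = (X - 1) ^ 5 *
    (X ^ 7 + 5 * X ^ 6 + 11 * X ^ 5 + 15 * X ^ 4 + 15 * X ^ 3 + 11 * X ^ 2 + 5 * X + 1) := by
  rw [p11388ConstDiff]
  ring

theorem toLaurent_one_sub_X_sq : toLaurent (1 - X ^ 2 : ℤ[X]) = T 1 * (T (-1) - T 1) := by
  rw [map_sub, map_one, toLaurent_X_pow, mul_sub, ← T_add, ← T_add]
  norm_num

theorem p11388ConstDiff_mul_X_pow_notMem_span {r : ℕ} (hr : r.Prime) (hr7 : 7 ≤ r) (n : ℕ) :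
    p11388ConstDiff * X ^ n ∉ Ideal.span {(r : ℤ[X]), (1 - X ^ 2) ^ r} := by
  intro h
  obtain ⟨a, b, hab⟩ := Ideal.mem_span_pair.mp h
  set S : (ZMod r)[X] :=
    X ^ 7 + 5 * X ^ 6 + 11 * X ^ 5 + 15 * X ^ 4 + 15 * X ^ 3 + 11 * X ^ 2 + 5 * X + 1
  have hmod : b.map (Int.castRingHom (ZMod r)) * (1 - X ^ 2) ^ r = (X - 1) ^ 5 * (S * X ^ n) := by
    simpa only [p11388ConstDiff_eq_mul, Polynomial.map_add, Polynomial.map_mul,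
      Polynomial.map_pow, Polynomial.map_sub, Polynomial.map_one, Polynomial.map_X,
      Polynomial.map_natCast, Polynomial.map_ofNat, CharP.cast_eq_zero, mul_zero, zero_add,
      mul_assoc] using congrArg (map (Int.castRingHom (ZMod r))) hab
  have hdvd : (X - Polynomial.C 1 : (ZMod r)[X]) ^ (5 + 1) ∣
      (X - Polynomial.C 1) ^ 5 * (S * X ^ n) := by
    rw [C_1, ← hmod]
    refine Dvd.dvd.mul_left ((pow_dvd_pow _ (by omega)).trans (pow_dvd_pow_of_dvd ?_ r)) _
    exact ⟨-(X + 1), by ring⟩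
  have h64 : ((2 ^ 6 : ℕ) : ZMod r) = 0 := by
    have hS := isRoot_of_X_sub_C_pow_succ_dvd hdvd
    simp only [IsRoot, eval_mul, eval_add, eval_pow, eval_X, eval_ofNat, eval_one, S] at hS
    norm_num at hS
    exact_mod_cast hS
  rw [ZMod.natCast_eq_zero_iff] at h64
  have := Nat.le_of_dvd two_pos (hr.dvd_of_dvd_pow h64)
  omega

theorem coeff_zero_P11388_sub_notMem_span {r : ℕ} (hr : r.Prime) (hr7 : 7 ≤ r) :
    (P11388 - P11388').coeff 0 ∉ Ideal.span {(r : ℤ[T;T⁻¹]), (T (-1) - T 1) ^ r} := by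
  intro h
  have hspan : Ideal.span {(r : ℤ[T;T⁻¹]), (T (-1) - T 1) ^ r} ≤
      (Ideal.span {(r : ℤ[X]), (1 - X ^ 2) ^ r}).map toLaurent := by
    rw [Ideal.span_le, Set.insert_subset_iff, Set.singleton_subset_iff]
    constructor
    · exact map_natCast (toLaurent (R := ℤ)) r ▸
        Ideal.mem_map_of_mem _ (Ideal.subset_span (by simp))
    · have hw : (T (-1) - T 1) ^ r = toLaurent ((1 - X ^ 2 : ℤ[X]) ^ r) * T (-r) := by
        rw [map_pow, toLaurent_one_sub_X_sq, mul_pow, T_pow, mul_right_comm, ← T_add]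
        simp
      exact hw ▸ Ideal.mul_mem_right _ _ (Ideal.mem_map_of_mem _ (Ideal.subset_span (by simp)))
  obtain ⟨n, hn⟩ := exists_mul_X_pow_mem_of_toLaurent_mem_map
    (toLaurent_p11388ConstDiff ▸ hspan (Ideal.mul_mem_right _ _ h))
  exact p11388ConstDiff_mul_X_pow_notMem_span hr hr7 n hn

/-- The knot `11_{388}` is not `r`-periodic for any prime `r ≥ 7`:
`P(v,z) − P(v⁻¹,−z)` does not lie in the ideal of `𝓡` generated by `r` and `z^r`. -/
theorem stmt_7 (r : ℕ) (hr : r.Prime) (hr7 : 7 ≤ r) :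
    ¬ ∃ a b : LL, a ∈ Rcal ∧ b ∈ Rcal ∧
      P11388 - P11388' = (r : LL) * a + zZ ^ r * b := by
  rintro ⟨a, b, -, hb, hab⟩
  obtain ⟨β, hβ⟩ : (T (-1) - T 1) ^ r ∣ b.coeff (-r) := by
    simpa using Rcal_le_negCoeffPowDvdSubring hb (-r)
  refine coeff_zero_P11388_sub_notMem_span hr hr7 (Ideal.mem_span_pair.mpr ⟨a.coeff 0, β, ?_⟩)
  rw [hab, AddMonoidAlgebra.coeff_add, Finsupp.add_apply, LaurentPolynomial.coeff_natCast_mul, zZ,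
    T_pow, coeff_T_mul, mul_one, zero_sub, hβ]
  ring
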